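/- arXiv:2209.14554 — 2 statements merged into one kernel-verified Lean document; each statement's English description precedes it below -/
import Mathlib

section
/- Let f : ℂ^k × ℂ^k → ℂ be sesquilinear. Then for every orthonormal basis {E_1,…,E_k} of ℂ^k, ∫_{S^{2k−1}} ∫_{S^{2k−1}} |⟨X,Y⟩|² · f(X,X) dθ(X) dθ(Y) = (V(S^{2k−1})²/k²) · Σ_{i=1}^k f(E_i,E_i). -/
/-!
Unitary invariance of `θ` makes the second-moment form `∫ ⟪u, X⟫⟪X, v⟫ dθ(X)` a multiple of
`⟪u, v⟫`. The reflection in `u^⊥` sends `u` to `-u` and fixes every `v ⊥ u`, so the off-diagonal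
entries vanish; unitaries act transitively on the sphere, so all diagonal entries `u = v`, `‖u‖ = 1`,
coincide, and summing them over an orthonormal basis gives `∫ ‖X‖² dθ = V`, so each equals `V / k`.
After exchanging the integrals, the inner integral `∫ |⟪Y, X⟫|² dθ(Y)` is such a diagonal entry,
and expanding `f(X, X)` in the basis `E` turns `∫ f(X, X) dθ` into `(V / k) ∑ᵢ f(Eᵢ, Eᵢ)`.
-/

open MeasureTheory Metric

noncomputable instance (k : ℕ) : MeasurableSpace (EuclideanSpace ℂ (Fin k)) :=
  MeasurableSpace.comap WithLp.ofLp MeasurableSpace.pi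
instance (k : ℕ) : BorelSpace (EuclideanSpace ℂ (Fin k)) := PiLp.borelSpace 2

/-- The spherical (surface) measure `θ` on the unit sphere `S^{2k-1} ⊂ ℂ^k`. -/
noncomputable def sphereMeasure (k : ℕ) :
    Measure (sphere (0 : EuclideanSpace ℂ (Fin k)) 1) :=
  (volume : Measure (EuclideanSpace ℂ (Fin k))).toSphere

/-- The total volume `V(S^{2k-1})` of the unit sphere. -/
noncomputable def sphereVol (k : ℕ) : ℝ := (sphereMeasure k Set.univ).toReal

/-- `f` is sesquilinear: linear in the first variable, conjugate-linear in the second. -/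
def Sesquilinear {H : Type*} [AddCommGroup H] [Module ℂ H] (f : H → H → ℂ) : Prop :=
  (∀ x x' y, f (x + x') y = f x y + f x' y) ∧
  (∀ (c : ℂ) (x y : H), f (c • x) y = c * f x y) ∧
  (∀ x y y', f x (y + y') = f x y + f x y') ∧
  (∀ (c : ℂ) (x y : H), f x (c • y) = (starRingEnd ℂ) c * f x y)

open Set Module
open scoped InnerProductSpace Pointwise

namespace Sesquilinear

noncomputable def toLinearMap₂ {M : Type*} [AddCommGroup M] [Module ℂ M] {f : M → M → ℂ}
    (hf : Sesquilinear f) : M →ₗ[ℂ] M →ₗ⋆[ℂ] ℂ :=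
  LinearMap.mk₂'ₛₗ _ _ f hf.1 hf.2.1 hf.2.2.1 hf.2.2.2

variable {H : Type*} [NormedAddCommGroup H] [InnerProductSpace ℂ H] {f : H → H → ℂ}

theorem apply_eq_sum (hf : Sesquilinear f) {ι : Type*} [Fintype ι] (E : OrthonormalBasis ι ℂ H)
    (x y : H) : f x y = ∑ i, ∑ j, ⟪E i, x⟫_ℂ * ⟪y, E j⟫_ℂ * f (E i) (E j) := by
  change hf.toLinearMap₂ x y = _
  conv_lhs => rw [← E.sum_repr' x, ← E.sum_repr' y]
  simp only [toLinearMap₂, map_sum, map_smul, map_smulₛₗ, inner_conj_symm, LinearMap.coe_sum,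
    LinearMap.coe_smul, Finset.sum_apply, Pi.smul_apply, LinearMap.mk₂'ₛₗ_apply, smul_eq_mul,
    Finset.mul_sum, mul_assoc, mul_left_comm]
  exact Finset.sum_comm

theorem continuous_apply_self [FiniteDimensional ℂ H] (hf : Sesquilinear f) :
    Continuous fun x => f x x := by
  refine Continuous.congr ?_ fun x => (hf.apply_eq_sum (stdOrthonormalBasis ℂ H) x x).symm
  fun_prop

end Sesquilinear

namespace LinearIsometryEquiv

def restrictScalars (R : Type*) {S E : Type*} [Semiring R] [Semiring S]
    [SeminormedAddCommGroup E] [Module R E] [Module S E] [LinearMap.CompatibleSMul E E R S]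
    (e : E ≃ₗᵢ[S] E) : E ≃ₗᵢ[R] E :=
  ⟨e.toLinearEquiv.restrictScalars R, e.norm_map⟩

section Sphere

variable {R E : Type*} [Semiring R] [SeminormedAddCommGroup E] [Module R E]

def sphereHomeomorph (e : E ≃ₗᵢ[R] E) : sphere (0 : E) 1 ≃ₜ sphere (0 : E) 1 :=
  e.toHomeomorph.subtype fun x => by simp

@[simp]
theorem coe_sphereHomeomorph_apply (e : E ≃ₗᵢ[R] E) (x : sphere (0 : E) 1) :
    (e.sphereHomeomorph x : E) = e x :=
  rfl

end Sphere

theorem measurePreserving_sphereHomeomorph {E : Type*} [NormedAddCommGroup E] [NormedSpace ℝ E]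
    [MeasurableSpace E] [BorelSpace E] {μ : Measure E} (e : E ≃ₗᵢ[ℝ] E)
    (he : MeasurePreserving e μ μ) :
    MeasurePreserving e.sphereHomeomorph μ.toSphere μ.toSphere := by
  have hmeas := e.sphereHomeomorph.continuous.measurable
  refine ⟨hmeas, Measure.ext fun s hs => ?_⟩
  -- `μ.toSphere s` is the `μ`-measure of the cone `Ioo 0 1 • s`, and `e` permutes these cones.
  have hcone : Ioo (0 : ℝ) 1 • ((↑) '' (e.sphereHomeomorph ⁻¹' s) : Set E) =
      e ⁻¹' (Ioo (0 : ℝ) 1 • ((↑) '' s)) := by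
    ext x
    simp only [mem_smul, mem_image, mem_preimage]
    constructor
    · rintro ⟨r, hr, _, ⟨y, hy, rfl⟩, rfl⟩
      exact ⟨r, hr, e y, ⟨_, hy, rfl⟩, by simp⟩
    · rintro ⟨r, hr, _, ⟨y, hy, rfl⟩, hx⟩
      refine ⟨r, hr, _, ⟨e.sphereHomeomorph.symm y, by simpa using hy, rfl⟩, ?_⟩
      change r • e.symm (y : E) = x
      rw [← map_smul, hx, symm_apply_apply]
  rw [Measure.map_apply hmeas hs, Measure.toSphere_apply' _ (hmeas hs),
    Measure.toSphere_apply' _ hs, hcone,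
    he.measure_preimage_emb e.toHomeomorph.measurableEmbedding]

end LinearIsometryEquiv

theorem exists_linearIsometryEquiv_apply_eq {𝕜 E : Type*} [RCLike 𝕜] [NormedAddCommGroup E]
    [InnerProductSpace 𝕜 E] [FiniteDimensional 𝕜 E] {u v : E} (hu : ‖u‖ = 1) (hv : ‖v‖ = 1) :
    ∃ U : E ≃ₗᵢ[𝕜] E, U u = v := by
  have : Nontrivial E := ⟨⟨u, 0, by rintro rfl; simp at hu⟩⟩
  let i₀ : Fin (finrank 𝕜 E) := ⟨0, finrank_pos⟩
  have hbasis : ∀ w : E, ‖w‖ = 1 → ∃ b : OrthonormalBasis (Fin (finrank 𝕜 E)) 𝕜 E, b i₀ = w :=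
    fun w hw => by
      obtain ⟨b, hb⟩ := Orthonormal.exists_orthonormalBasis_extension_of_card_eq
        (v := fun _ => w) (s := {i₀}) (Fintype.card_fin _).symm
        (orthonormal_subsingleton_iff.mpr fun _ => hw)
      exact ⟨b, hb i₀ rfl⟩
  obtain ⟨bu, rfl⟩ := hbasis u hu
  obtain ⟨bv, rfl⟩ := hbasis v hv
  exact ⟨bu.repr.trans bv.repr.symm, by simp⟩

section UnitarilyInvariant

variable {H : Type*} [NormedAddCommGroup H] [InnerProductSpace ℂ H] [MeasurableSpace H]

def IsUnitarilyInvariant (ν : Measure (sphere (0 : H) 1)) : Prop :=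
  ∀ U : H ≃ₗᵢ[ℂ] H, MeasurePreserving U.sphereHomeomorph ν ν

/-- `secondMoment ν u v = ⟪u, S v⟫` for the second-moment operator `S = ∫ X ⟪X, ·⟫ dν(X)`. -/
noncomputable def secondMoment (ν : Measure (sphere (0 : H) 1)) (u v : H) : ℂ :=
  ∫ X, ⟪u, (X : H)⟫_ℂ * ⟪(X : H), v⟫_ℂ ∂ν

variable {ν : Measure (sphere (0 : H) 1)}

theorem secondMoment_neg_left (u v : H) : secondMoment ν (-u) v = -secondMoment ν u v := by
  simp [secondMoment, ← integral_neg]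

variable [BorelSpace H]

theorem secondMoment_map {U : H ≃ₗᵢ[ℂ] H} (hU : MeasurePreserving U.sphereHomeomorph ν ν)
    (u v : H) : secondMoment ν (U u) (U v) = secondMoment ν u v := by
  rw [secondMoment, ← hU.integral_comp U.sphereHomeomorph.measurableEmbedding]
  simp [secondMoment]

theorem IsUnitarilyInvariant.secondMoment_eq_zero (hν : IsUnitarilyInvariant ν) {u v : H}
    (huv : ⟪u, v⟫_ℂ = 0) : secondMoment ν u v = 0 := by
  let R := (ℂ ∙ u)ᗮ.reflection
  have hRu : R u = -u := Submodule.reflection_orthogonalComplement_singleton_eq_neg u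
  have hRv : R v = v := Submodule.reflection_mem_subspace_eq_self
    (Submodule.mem_orthogonal_singleton_iff_inner_right.mpr huv)
  have h := secondMoment_map (hν R) u v
  rw [hRu, hRv, secondMoment_neg_left, neg_eq_iff_add_eq_zero, ← two_mul] at h
  simpa using h

variable [FiniteDimensional ℂ H] [IsFiniteMeasure ν]

theorem sum_secondMoment_orthonormalBasis {ι : Type*} [Fintype ι] (b : OrthonormalBasis ι ℂ H) :
    ∑ i, secondMoment ν (b i) (b i) = ν.real univ := by
  have hX (X : sphere (0 : H) 1) : ∑ i, ⟪b i, (X : H)⟫_ℂ * ⟪(X : H), b i⟫_ℂ = 1 := by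
    simp_rw [mul_comm ⟪b _, (X : H)⟫_ℂ, b.sum_inner_mul_inner]
    exact inner_self_eq_one_of_norm_eq_one (by simp)
  simp only [secondMoment]
  rw [← integral_finsetSum _ fun i _ =>
    (by fun_prop : Continuous _).integrable_of_hasCompactSupport (.of_compactSpace _)]
  simp [hX]

theorem IsUnitarilyInvariant.secondMoment_self (hν : IsUnitarilyInvariant ν) {u : H}
    (hu : ‖u‖ = 1) : secondMoment ν u u = ν.real univ / finrank ℂ H := by
  have : Nontrivial H := ⟨⟨u, 0, by rintro rfl; simp at hu⟩⟩
  let b := stdOrthonormalBasis ℂ H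
  have hb (i) : secondMoment ν (b i) (b i) = secondMoment ν u u := by
    obtain ⟨U, hU⟩ := exists_linearIsometryEquiv_apply_eq (𝕜 := ℂ) hu (b.orthonormal.1 i)
    rw [← hU, secondMoment_map (hν U)]
  have hsum := sum_secondMoment_orthonormalBasis (ν := ν) b
  simp only [hb, Finset.sum_const, Finset.card_univ, Fintype.card_fin, nsmul_eq_mul] at hsum
  rw [← hsum, mul_div_cancel_left₀ _ (Nat.cast_ne_zero.mpr finrank_pos.ne')]

theorem IsUnitarilyInvariant.integral_norm_inner_sq (hν : IsUnitarilyInvariant ν) {x : H}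
    (hx : ‖x‖ = 1) : ∫ Y, (‖⟪(Y : H), x⟫_ℂ‖ : ℂ) ^ 2 ∂ν = ν.real univ / finrank ℂ H := by
  rw [← hν.secondMoment_self hx, secondMoment]
  congr 1 with Y
  rw [norm_inner_symm, ← inner_conj_symm (Y : H) x, Complex.mul_conj']

theorem IsUnitarilyInvariant.integral_sesquilinear_apply_self (hν : IsUnitarilyInvariant ν)
    {f : H → H → ℂ} (hf : Sesquilinear f) {ι : Type*} [Fintype ι] (E : OrthonormalBasis ι ℂ H) :
    ∫ X, f X X ∂ν = ν.real univ / finrank ℂ H * ∑ i, f (E i) (E i) := by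
  classical
  have hmoment (i j : ι) : secondMoment ν (E i) (E j) =
      if i = j then (ν.real univ : ℂ) / finrank ℂ H else 0 := by
    split_ifs with hij
    · subst hij
      exact hν.secondMoment_self (E.orthonormal.1 i)
    · exact hν.secondMoment_eq_zero (E.orthonormal.2 hij)
  have hint (i j : ι) : Integrable (fun X : sphere (0 : H) 1 =>
      ⟪E i, (X : H)⟫_ℂ * ⟪(X : H), E j⟫_ℂ * f (E i) (E j)) ν :=
    (by fun_prop : Continuous _).integrable_of_hasCompactSupport (.of_compactSpace _)
  calc ∫ X, f X X ∂ν
      = ∑ i, ∑ j, secondMoment ν (E i) (E j) * f (E i) (E j) := by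
        conv_lhs => enter [2, X]; rw [hf.apply_eq_sum E]
        rw [integral_finsetSum _ fun i _ => integrable_finsetSum _ fun j _ => hint i j]
        refine Finset.sum_congr rfl fun i _ => ?_
        rw [integral_finsetSum _ fun j _ => hint i j]
        simp_rw [integral_mul_const, secondMoment]
    _ = ν.real univ / finrank ℂ H * ∑ i, f (E i) (E i) := by
        simp_rw [hmoment, ite_mul, zero_mul, Finset.sum_ite_eq, Finset.mem_univ, if_true,
          Finset.mul_sum]

end UnitarilyInvariant

theorem isUnitarilyInvariant_sphereMeasure (k : ℕ) : IsUnitarilyInvariant (sphereMeasure k) :=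
  fun U => (U.restrictScalars ℝ).measurePreserving_sphereHomeomorph
    (U.restrictScalars ℝ).measurePreserving

instance (k : ℕ) : IsFiniteMeasure (sphereMeasure k) := by
  unfold sphereMeasure
  infer_instance

theorem stmt_7_general (k : ℕ)
    (f : EuclideanSpace ℂ (Fin k) → EuclideanSpace ℂ (Fin k) → ℂ) (hf : Sesquilinear f)
    (E : OrthonormalBasis (Fin k) ℂ (EuclideanSpace ℂ (Fin k))) :
    ∫ Y : sphere (0 : EuclideanSpace ℂ (Fin k)) 1,
      ∫ X : sphere (0 : EuclideanSpace ℂ (Fin k)) 1,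
        ((‖(inner ℂ (Y : EuclideanSpace ℂ (Fin k)) (X : EuclideanSpace ℂ (Fin k)) : ℂ)‖ : ℂ)) ^ 2 *
          f (X : EuclideanSpace ℂ (Fin k)) (X : EuclideanSpace ℂ (Fin k))
        ∂(sphereMeasure k) ∂(sphereMeasure k) =
      (((sphereVol k : ℝ) : ℂ) ^ 2 / (k : ℂ) ^ 2) * ∑ i : Fin k, f (E i) (E i) := by
  have hν := isUnitarilyInvariant_sphereMeasure k
  have hint : Integrable (Function.uncurry fun Y X : sphere (0 : EuclideanSpace ℂ (Fin k)) 1 =>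
      (‖⟪(Y : EuclideanSpace ℂ (Fin k)), X⟫_ℂ‖ : ℂ) ^ 2 * f X X)
      ((sphereMeasure k).prod (sphereMeasure k)) := by
    refine Continuous.integrable_of_hasCompactSupport ?_ (.of_compactSpace _)
    simp only [Function.uncurry_def]
    exact .mul (by fun_prop) (hf.continuous_apply_self.comp (by fun_prop))
  rw [integral_integral_swap hint]
  simp_rw [integral_mul_const, hν.integral_norm_inner_sq (norm_eq_of_mem_sphere _)]
  rw [integral_const_mul, hν.integral_sesquilinear_apply_self hf E, finrank_euclideanSpace,
    Fintype.card_fin, sphereVol, ← measureReal_def]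
  ring

/-- for sesquilinear `f` and any orthonormal basis `{E_i}` of `ℂ^k`,
`∫∫_{S^{2k-1}×S^{2k-1}} |⟨X,Y⟩|²·f(X,X) dθ(X)dθ(Y) = (V(S^{2k-1})²/k²)·Σ_i f(E_i,E_i)`. -/
theorem stmt_7 (k : ℕ) (hk : 1 ≤ k)
    (f : EuclideanSpace ℂ (Fin k) → EuclideanSpace ℂ (Fin k) → ℂ) (hf : Sesquilinear f)
    (E : OrthonormalBasis (Fin k) ℂ (EuclideanSpace ℂ (Fin k))) :
    ∫ Y : sphere (0 : EuclideanSpace ℂ (Fin k)) 1,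
      ∫ X : sphere (0 : EuclideanSpace ℂ (Fin k)) 1,
        ((‖(inner ℂ (Y : EuclideanSpace ℂ (Fin k)) (X : EuclideanSpace ℂ (Fin k)) : ℂ)‖ : ℂ)) ^ 2 *
          f (X : EuclideanSpace ℂ (Fin k)) (X : EuclideanSpace ℂ (Fin k))
        ∂(sphereMeasure k) ∂(sphereMeasure k) =
      (((sphereVol k : ℝ) : ℂ) ^ 2 / (k : ℂ) ^ 2) * ∑ i : Fin k, f (E i) (E i) :=
  stmt_7_general k f hf E
end

section
/- Let 1 ≤ k ≤ n, let g : (ℂ^n)^4 → ℂ be quadrilinear of curvature type satisfying the Kähler-type symmetries, and let Σ ⊆ ℂ^n be a k-dimensional complex subspace that minimizes s among all k-dimensional complex subspaces of ℂ^n. Then for every orthonormal basis {E_1,…,E_k} of Σ and every Z ∈ Σ^⊥, the (real) number Σ_{i=1}^k g(E_i,E_i,Z,Z) satisfies Σ_{i=1}^k g(E_i,E_i,Z,Z) ≥ (s(Σ)/(k+1)) · ‖Z‖². -/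
/-!
Replace `E_a` by the unit vector along `E_a + t Z`, where `Z ⊥ Σ`. Since `Σ` minimizes `s`,
after clearing the normalization `(1 + t² ‖Z‖²)²` the change of `s` is a quartic polynomial in `t`
that is nonnegative for all real `t`; adding its values at `t` and `-t`, the coefficient of `t²`
must be nonnegative, which reads
`‖Z‖² Σ_j g(E_j,E_j,E_a,E_a) ≤ Σ_j g(E_j,E_j,Z,Z) + g(E_a,E_a,Z,Z) + Re g(Z,E_a,Z,E_a)`.
The last term changes sign under `Z ↦ iZ` while the others do not, so it can be dropped, and
summing over `a` gives `‖Z‖² s(Σ) ≤ (k + 1) Σ_i g(E_i,E_i,Z,Z)`.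
-/

/-- `g` is quadrilinear of curvature type: linear in the first and third variables,
conjugate-linear in the second and fourth. -/
def CurvatureType {H : Type*} [AddCommGroup H] [Module ℂ H] (g : H → H → H → H → ℂ) : Prop :=
  (∀ x x' y z w, g (x + x') y z w = g x y z w + g x' y z w) ∧
  (∀ (c : ℂ) (x y z w : H), g (c • x) y z w = c * g x y z w) ∧
  (∀ x y y' z w, g x (y + y') z w = g x y z w + g x y' z w) ∧
  (∀ (c : ℂ) (x y z w : H), g x (c • y) z w = (starRingEnd ℂ) c * g x y z w) ∧
  (∀ x y z z' w, g x y (z + z') w = g x y z w + g x y z' w) ∧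
  (∀ (c : ℂ) (x y z w : H), g x y (c • z) w = c * g x y z w) ∧
  (∀ x y z w w', g x y z (w + w') = g x y z w + g x y z w') ∧
  (∀ (c : ℂ) (x y z w : H), g x y z (c • w) = (starRingEnd ℂ) c * g x y z w)

/-- The Kähler-type symmetries of a curvature-type quadrilinear map. -/
def KahlerSymmetries {H : Type*} [AddCommGroup H] [Module ℂ H] (g : H → H → H → H → ℂ) : Prop :=
  (∀ x y z w, g x y z w = g z y x w) ∧
  (∀ x y z w, g x y z w = (starRingEnd ℂ) (g y x w z))

open Finset Function Filter Topology
open scoped InnerProductSpace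

lemma nonneg_of_forall_mul_sq_add_mul_pow_four_nonneg {b d : ℝ}
    (h : ∀ t : ℝ, 0 ≤ b * t ^ 2 + d * t ^ 4) : 0 ≤ b := by
  have hlim : Tendsto (fun t : ℝ => b + d * t ^ 2) (𝓝[≠] 0) (𝓝 b) := by
    have : Continuous (fun t : ℝ => b + d * t ^ 2) := by fun_prop
    simpa using (this.tendsto 0).mono_left nhdsWithin_le_nhds
  refine ge_of_tendsto hlim ?_
  filter_upwards [self_mem_nhdsWithin] with t ht
  have ht2 : 0 < t ^ 2 := by have : t ≠ 0 := ht; positivity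
  nlinarith [h t]

section CurvatureType

variable {H : Type*} [AddCommGroup H] [Module ℂ H] {g : H → H → H → H → ℂ}

lemma KahlerSymmetries.pair_swap (hsym : KahlerSymmetries g) (x y z w : H) :
    g x y z w = g z w x y := by
  rw [hsym.1, hsym.2, hsym.1, ← hsym.2]

lemma CurvatureType.apply_smul_smul_right (hg : CurvatureType g) (c : ℂ) (x y z w : H) :
    g x y (c • z) (c • w) = c * starRingEnd ℂ c * g x y z w := by
  rw [hg.2.2.2.2.2.1, hg.2.2.2.2.2.2.2]; ring

lemma CurvatureType.even_part_right (hg : CurvatureType g) (s : ℝ) (x y u z : H) :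
    g x y (u + (s : ℂ) • z) (u + (s : ℂ) • z) + g x y (u - (s : ℂ) • z) (u - (s : ℂ) • z) =
      2 * g x y u u + 2 * s ^ 2 * g x y z z := by
  obtain ⟨-, -, -, -, add₃, smul₃, add₄, smul₄⟩ := hg
  simp only [sub_eq_add_neg, ← neg_smul, add₃, add₄, smul₃, smul₄, map_neg, Complex.conj_ofReal]
  ring

lemma CurvatureType.even_part_diag (hg : CurvatureType g) (hsym : KahlerSymmetries g) (s : ℝ)
    (u z : H) :
    (g (u + (s : ℂ) • z) (u + (s : ℂ) • z) (u + (s : ℂ) • z) (u + (s : ℂ) • z)).re +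
      (g (u - (s : ℂ) • z) (u - (s : ℂ) • z) (u - (s : ℂ) • z) (u - (s : ℂ) • z)).re =
      2 * (g u u u u).re + s ^ 2 * (8 * (g u u z z).re + 4 * (g z u z u).re) +
        2 * s ^ 4 * (g z z z z).re := by
  obtain ⟨add₁, smul₁, add₂, smul₂, add₃, smul₃, add₄, smul₄⟩ := hg
  have h : g (u + (s : ℂ) • z) (u + (s : ℂ) • z) (u + (s : ℂ) • z) (u + (s : ℂ) • z) +
      g (u - (s : ℂ) • z) (u - (s : ℂ) • z) (u - (s : ℂ) • z) (u - (s : ℂ) • z) =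
      ((2 : ℝ) : ℂ) * g u u u u + ((2 * s ^ 2 : ℝ) : ℂ) * (g z z u u + g z u z u + g z u u z
        + g u z z u + g u z u z + g u u z z) + ((2 * s ^ 4 : ℝ) : ℂ) * g z z z z := by
    simp only [sub_eq_add_neg, ← neg_smul, add₁, add₂, add₃, add₄, smul₁, smul₂, smul₃, smul₄,
      map_neg, Complex.conj_ofReal]
    push_cast
    ring
  rw [← Complex.add_re, h, hsym.pair_swap z z u u, hsym.1 z u u z, hsym.1 u z z u,
    hsym.pair_swap z z u u, hsym.2 u z u z]
  simp only [Complex.add_re, Complex.re_ofReal_mul, Complex.conj_re]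
  ring

end CurvatureType

lemma sum_sum_update {ι H M : Type*} [Fintype ι] [DecidableEq ι] [AddCommMonoid M]
    (F : H → H → M) (v : ι → H) (a : ι) (x : H) :
    ∑ i, ∑ j, F (update v a x i) (update v a x j) =
      F x x + ∑ j ∈ univ.erase a, (F x (v j) + F (v j) x) +
        ∑ i ∈ univ.erase a, ∑ j ∈ univ.erase a, F (v i) (v j) := by
  have hsplit : ∀ φ : ι → M, ∑ i, φ i = φ a + ∑ i ∈ univ.erase a, φ i :=
    fun φ => (add_sum_erase _ φ (mem_univ a)).symm
  have hoff : ∀ i ∈ univ.erase a, update v a x i = v i :=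
    fun i hi => update_of_ne (ne_of_mem_erase hi) _ _
  simp only [hsplit (fun j => F _ (update v a x j)), hsplit (fun i => F (update v a x i) _ + _),
    update_self]
  simp +contextual only [hoff, sum_add_distrib]
  abel

def scalarCurvature {ι H : Type*} [Fintype ι] (g : H → H → H → H → ℂ) (v : ι → H) : ℂ :=
  ∑ i, ∑ j, g (v i) (v i) (v j) (v j)

lemma Orthonormal.update {𝕜 E ι : Type*} [RCLike 𝕜] [NormedAddCommGroup E]
    [InnerProductSpace 𝕜 E] [DecidableEq ι] {e : ι → E} (he : Orthonormal 𝕜 e) {a : ι} {x : E}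
    (hx : ‖x‖ = 1) (hxe : ∀ j ≠ a, ⟪e j, x⟫_𝕜 = 0) : Orthonormal 𝕜 (update e a x) := by
  refine ⟨fun i => ?_, fun i j hij => ?_⟩
  · rcases eq_or_ne i a with rfl | hi
    · simpa using hx
    · simpa [hi] using he.1 i
  · rcases eq_or_ne i a with rfl | hi
    · simpa [hij.symm] using inner_eq_zero_symm.mp (hxe j hij.symm)
    · rcases eq_or_ne j a with rfl | hj
      · simpa [hi] using hxe i hi
      · simpa [hi, hj] using he.2 hij

lemma norm_add_ofReal_smul_sq {H : Type*} [NormedAddCommGroup H] [InnerProductSpace ℂ H]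
    {u z : H} (h : ⟪u, z⟫_ℂ = 0) (s : ℝ) :
    ‖u + (s : ℂ) • z‖ ^ 2 = ‖u‖ ^ 2 + s ^ 2 * ‖z‖ ^ 2 := by
  have := norm_add_sq_eq_norm_sq_add_norm_sq_of_inner_eq_zero u ((s : ℂ) • z)
    (by rw [inner_smul_right, h, mul_zero])
  rw [norm_smul, Complex.norm_real, Real.norm_eq_abs] at this
  rw [sq, this]
  linear_combination ‖z‖ ^ 2 * abs_mul_abs_self s

section Minimal

variable {H ι : Type*} [Fintype ι] [DecidableEq ι] {g : H → H → H → H → ℂ}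

def partialScalarCurvature (g : H → H → H → H → ℂ) (e : ι → H) (a : ι) (x : H) : ℂ :=
  g x x x x + ∑ j ∈ univ.erase a, (g x x (e j) (e j) + g (e j) (e j) x x)

lemma scalarCurvature_update_sub (g : H → H → H → H → ℂ) (e : ι → H) (a : ι) (x : H) :
    scalarCurvature g (update e a x) - scalarCurvature g e =
      partialScalarCurvature g e a x - partialScalarCurvature g e a (e a) := by
  have hx := sum_sum_update (fun y z => g y y z z) e a x
  have hself := sum_sum_update (fun y z => g y y z z) e a (e a)
  rw [update_eq_self] at hself
  simp only [scalarCurvature, partialScalarCurvature, hx, hself]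
  abel

variable [NormedAddCommGroup H] [InnerProductSpace ℂ H] {e : ι → H}

def IsMinimalFrame (g : H → H → H → H → ℂ) (e : ι → H) : Prop :=
  ∀ v : ι → H, Orthonormal ℂ v → (scalarCurvature g e).re ≤ (scalarCurvature g v).re

lemma re_partialScalarCurvature_le (he : Orthonormal ℂ e) (hmin : IsMinimalFrame g e)
    {a : ι} {x : H} (hx : ‖x‖ = 1) (hxe : ∀ j ≠ a, ⟪e j, x⟫_ℂ = 0) :
    (partialScalarCurvature g e a (e a)).re ≤ (partialScalarCurvature g e a x).re := by
  have hsub := congrArg Complex.re (scalarCurvature_update_sub g e a x)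
  rw [Complex.sub_re, Complex.sub_re] at hsub
  linarith [hmin _ (he.update hx hxe)]

lemma sq_norm_sq_mul_re_partialScalarCurvature_le (hg : CurvatureType g)
    (hsym : KahlerSymmetries g) (he : Orthonormal ℂ e) (hmin : IsMinimalFrame g e)
    {a : ι} {y : H} (hy : y ≠ 0) (hye : ∀ j ≠ a, ⟪e j, y⟫_ℂ = 0) :
    (‖y‖ ^ 2) ^ 2 * (partialScalarCurvature g e a (e a)).re ≤
      (g y y y y).re + 2 * ‖y‖ ^ 2 * ∑ j ∈ univ.erase a, (g (e j) (e j) y y).re := by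
  obtain ⟨add₁, smul₁, add₂, smul₂, add₃, smul₃, add₄, smul₄⟩ := hg
  set c : ℝ := ‖y‖⁻¹
  have hy0 : 0 < ‖y‖ := norm_pos_iff.mpr hy
  have hx : ‖(c : ℂ) • y‖ = 1 := by
    rw [norm_smul, Complex.norm_real, Real.norm_of_nonneg (by positivity), inv_mul_cancel₀ hy0.ne']
  have hxe : ∀ j ≠ a, ⟪e j, (c : ℂ) • y⟫_ℂ = 0 := fun j hj => by
    rw [inner_smul_right, hye j hj, mul_zero]
  have hle := re_partialScalarCurvature_le he hmin hx hxe
  have hscale : partialScalarCurvature g e a ((c : ℂ) • y) =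
      ((c ^ 4 : ℝ) : ℂ) * g y y y y +
        ((2 * c ^ 2 : ℝ) : ℂ) * ∑ j ∈ univ.erase a, g (e j) (e j) y y := by
    simp only [partialScalarCurvature, smul₁, smul₂, smul₃, smul₄, Complex.conj_ofReal,
      hsym.pair_swap y y, mul_sum]
    push_cast
    ring_nf
  rw [hscale, Complex.add_re, Complex.re_ofReal_mul, Complex.re_ofReal_mul, Complex.re_sum] at hle
  calc (‖y‖ ^ 2) ^ 2 * (partialScalarCurvature g e a (e a)).re
      ≤ (‖y‖ ^ 2) ^ 2 * (c ^ 4 * (g y y y y).re +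
          2 * c ^ 2 * ∑ j ∈ univ.erase a, (g (e j) (e j) y y).re) := by gcongr
    _ = _ := by simp only [c]; field_simp

theorem sq_norm_mul_re_sum_le_add (hg : CurvatureType g) (hsym : KahlerSymmetries g)
    (he : Orthonormal ℂ e) (hmin : IsMinimalFrame g e)
    (a : ι) {Z : H} (hZ : ∀ i, ⟪e i, Z⟫_ℂ = 0) :
    ‖Z‖ ^ 2 * (∑ j, g (e j) (e j) (e a) (e a)).re ≤
      (∑ j, g (e j) (e j) Z Z).re + (g (e a) (e a) Z Z).re + (g Z (e a) Z (e a)).re := by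
  set u := e a
  set m := ‖Z‖ ^ 2
  set T : H → ℝ := fun y => ∑ j ∈ univ.erase a, (g (e j) (e j) y y).re
  have hvar : ∀ s : ℝ, (1 + s ^ 2 * m) ^ 2 * (partialScalarCurvature g e a u).re ≤
      (g (u + (s : ℂ) • Z) (u + (s : ℂ) • Z) (u + (s : ℂ) • Z) (u + (s : ℂ) • Z)).re +
        2 * (1 + s ^ 2 * m) * T (u + (s : ℂ) • Z) := by
    intro s
    have hnorm : ‖u + (s : ℂ) • Z‖ ^ 2 = 1 + s ^ 2 * m := by
      rw [norm_add_ofReal_smul_sq (hZ a), he.1 a, one_pow]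
    have hne : u + (s : ℂ) • Z ≠ 0 := by
      rw [← norm_ne_zero_iff, ← pow_ne_zero_iff two_ne_zero, hnorm]
      positivity
    have hperp : ∀ j ≠ a, ⟪e j, u + (s : ℂ) • Z⟫_ℂ = 0 := fun j hj => by
      rw [inner_add_right, inner_smul_right, hZ, he.inner_eq_zero hj, mul_zero, add_zero]
    simpa only [hnorm] using sq_norm_sq_mul_re_partialScalarCurvature_le hg hsym he hmin hne hperp
  have hP : (partialScalarCurvature g e a u).re = (g u u u u).re + 2 * T u := by
    simp only [partialScalarCurvature, T, hsym.pair_swap u u, Complex.add_re, Complex.re_sum,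
      sum_add_distrib]
    ring
  have hT : ∀ s : ℝ, T (u + (s : ℂ) • Z) + T (u - (s : ℂ) • Z) = 2 * T u + 2 * s ^ 2 * T Z := by
    intro s
    simp only [T, ← sum_add_distrib, mul_sum, ← Complex.add_re, hg.even_part_right]
    refine sum_congr rfl fun j _ => ?_
    simp [Complex.mul_re, ← Complex.ofReal_pow]
  -- `b` and `d` are the coefficients of `s²` and `s⁴` in the even part of `hvar`.
  have hb := nonneg_of_forall_mul_sq_add_mul_pow_four_nonneg
    (b := 8 * (g u u Z Z).re + 4 * (g Z u Z u).re + 4 * T Z - 4 * m * ((g u u u u).re + T u))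
    (d := 2 * (g Z Z Z Z).re + 4 * m * T Z - 2 * m ^ 2 * ((g u u u u).re + 2 * T u))
    fun s => by
      have hpos := hvar s
      have hneg := hvar (-s)
      simp only [Complex.ofReal_neg, neg_smul, ← sub_eq_add_neg, neg_sq] at hneg
      rw [hP] at hpos hneg
      linear_combination hpos + hneg + hg.even_part_diag hsym s u Z + 2 * (1 + s ^ 2 * m) * hT s
  have hsplit : ∀ y, (∑ j, g (e j) (e j) y y).re = (g u u y y).re + T y := fun y => by
    rw [← add_sum_erase _ _ (mem_univ a), Complex.add_re, Complex.re_sum]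
  rw [hsplit, hsplit]
  linarith

theorem sq_norm_mul_re_sum_le (hg : CurvatureType g) (hsym : KahlerSymmetries g)
    (he : Orthonormal ℂ e) (hmin : IsMinimalFrame g e)
    (a : ι) {Z : H} (hZ : ∀ i, ⟪e i, Z⟫_ℂ = 0) :
    ‖Z‖ ^ 2 * (∑ j, g (e j) (e j) (e a) (e a)).re ≤
      (∑ j, g (e j) (e j) Z Z).re + (g (e a) (e a) Z Z).re := by
  have hIZ : ∀ x y, g x y (Complex.I • Z) (Complex.I • Z) = g x y Z Z := fun x y => by
    rw [hg.apply_smul_smul_right, Complex.mul_conj, Complex.normSq_I, Complex.ofReal_one, one_mul]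
  have hflip : g (Complex.I • Z) (e a) (Complex.I • Z) (e a) = -g Z (e a) Z (e a) := by
    rw [hg.2.1, hg.2.2.2.2.2.1, ← mul_assoc, Complex.I_mul_I, neg_one_mul]
  have h := sq_norm_mul_re_sum_le_add hg hsym he hmin a hZ
  have hI := sq_norm_mul_re_sum_le_add hg hsym he hmin a (Z := Complex.I • Z)
    fun i => by rw [inner_smul_right, hZ, mul_zero]
  simp only [hIZ, hflip, norm_smul, Complex.norm_I, one_mul, Complex.neg_re] at hI
  linarith

theorem sq_norm_mul_re_scalarCurvature_le (hg : CurvatureType g) (hsym : KahlerSymmetries g)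
    (he : Orthonormal ℂ e) (hmin : IsMinimalFrame g e)
    {Z : H} (hZ : ∀ i, ⟪e i, Z⟫_ℂ = 0) :
    ‖Z‖ ^ 2 * (scalarCurvature g e).re ≤
      (Fintype.card ι + 1) * (∑ i, g (e i) (e i) Z Z).re :=
  calc ‖Z‖ ^ 2 * (scalarCurvature g e).re
      = ∑ a, ‖Z‖ ^ 2 * (∑ j, g (e j) (e j) (e a) (e a)).re := by
        rw [scalarCurvature, sum_comm, Complex.re_sum, mul_sum]
    _ ≤ ∑ a, ((∑ j, g (e j) (e j) Z Z).re + (g (e a) (e a) Z Z).re) :=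
        sum_le_sum fun a _ => sq_norm_mul_re_sum_le hg hsym he hmin a hZ
    _ = (Fintype.card ι + 1) * (∑ i, g (e i) (e i) Z Z).re := by
        rw [sum_add_distrib, sum_const, card_univ, nsmul_eq_mul, ← Complex.re_sum]
        ring

end Minimal

lemma isMinimalFrame_of_forall_orthonormalBasis {H : Type*} [NormedAddCommGroup H]
    [InnerProductSpace ℂ H] {g : H → H → H → H → ℂ} {k : ℕ} {P : Submodule ℂ H}
    (hmin : ∀ (E : OrthonormalBasis (Fin k) ℂ P) (Q : Submodule ℂ H),
        Module.finrank ℂ Q = k → ∀ E' : OrthonormalBasis (Fin k) ℂ Q,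
        (∑ i : Fin k, ∑ j : Fin k, g (E i) (E i) (E j) (E j)).re ≤
          (∑ i : Fin k, ∑ j : Fin k, g (E' i) (E' i) (E' j) (E' j)).re)
    (E : OrthonormalBasis (Fin k) ℂ P) : IsMinimalFrame g fun i => (E i : H) := by
  intro v hv
  set Q := Submodule.span ℂ (Set.range v)
  have hQ : Module.finrank ℂ Q = k := by
    rw [finrank_span_eq_card hv.linearIndependent, Fintype.card_fin]
  have : FiniteDimensional ℂ Q := FiniteDimensional.span_of_finite ℂ (Set.finite_range v)
  let w : Fin k → Q := fun i => ⟨v i, Submodule.subset_span (Set.mem_range_self i)⟩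
  have hw : Orthonormal ℂ w := orthonormal_span hv
  have hspan : ⊤ ≤ Submodule.span ℂ (Set.range w) := by
    refine (Submodule.eq_top_of_finrank_eq ?_).ge
    rw [finrank_span_eq_card hw.linearIndependent, Fintype.card_fin, hQ]
  simpa [scalarCurvature, w] using hmin E Q hQ (OrthonormalBasis.mk hw hspan)

theorem stmt_12_general (n k : ℕ)
    (g : EuclideanSpace ℂ (Fin n) → EuclideanSpace ℂ (Fin n) → EuclideanSpace ℂ (Fin n) →
      EuclideanSpace ℂ (Fin n) → ℂ)
    (hg : CurvatureType g) (hsym : KahlerSymmetries g)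
    (P : Submodule ℂ (EuclideanSpace ℂ (Fin n)))
    (hmin :
      ∀ (E : OrthonormalBasis (Fin k) ℂ P) (Q : Submodule ℂ (EuclideanSpace ℂ (Fin n))),
        Module.finrank ℂ Q = k → ∀ E' : OrthonormalBasis (Fin k) ℂ Q,
        (∑ i : Fin k, ∑ j : Fin k, g (E i) (E i) (E j) (E j)).re ≤
          (∑ i : Fin k, ∑ j : Fin k, g (E' i) (E' i) (E' j) (E' j)).re)
    (E : OrthonormalBasis (Fin k) ℂ P)
    (Z : EuclideanSpace ℂ (Fin n)) (hZ : Z ∈ Pᗮ) :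
    ((∑ i : Fin k, ∑ j : Fin k, g (E i) (E i) (E j) (E j)).re / ((k : ℝ) + 1)) * ‖Z‖ ^ 2 ≤
      (∑ i : Fin k, g (E i) (E i) Z Z).re := by
  have h := sq_norm_mul_re_scalarCurvature_le hg hsym
    (E.orthonormal.comp_linearIsometry P.subtypeₗᵢ)
    (isMinimalFrame_of_forall_orthonormalBasis hmin E)
    (fun i => Submodule.inner_right_of_mem_orthogonal (E i).2 hZ)
  rw [Fintype.card_fin] at h
  rw [div_mul_eq_mul_div, div_le_iff₀ (by positivity), mul_comm _ (_ + 1 : ℝ), mul_comm]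
  simpa [scalarCurvature] using h

/-- second part of the Ni–Zheng estimate (minimizing case). If the
`k`-dimensional subspace `P` minimizes `s` among all `k`-dimensional subspaces, then for every
orthonormal basis `{E_i}` of `P` and every `Z ∈ P^⊥`,
`Σ_i g(E_i,E_i,Z,Z) ≥ (s(P)/(k+1))·‖Z‖²`. -/
theorem stmt_12 (n k : ℕ) (hk : 1 ≤ k) (hkn : k ≤ n)
    (g : EuclideanSpace ℂ (Fin n) → EuclideanSpace ℂ (Fin n) → EuclideanSpace ℂ (Fin n) →
      EuclideanSpace ℂ (Fin n) → ℂ)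
    (hg : CurvatureType g) (hsym : KahlerSymmetries g)
    (P : Submodule ℂ (EuclideanSpace ℂ (Fin n))) (hP : Module.finrank ℂ P = k)
    (hmin :
      ∀ (E : OrthonormalBasis (Fin k) ℂ P) (Q : Submodule ℂ (EuclideanSpace ℂ (Fin n))),
        Module.finrank ℂ Q = k → ∀ E' : OrthonormalBasis (Fin k) ℂ Q,
        (∑ i : Fin k, ∑ j : Fin k, g (E i) (E i) (E j) (E j)).re ≤
          (∑ i : Fin k, ∑ j : Fin k, g (E' i) (E' i) (E' j) (E' j)).re)
    (E : OrthonormalBasis (Fin k) ℂ P)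
    (Z : EuclideanSpace ℂ (Fin n)) (hZ : Z ∈ Pᗮ) :
    ((∑ i : Fin k, ∑ j : Fin k, g (E i) (E i) (E j) (E j)).re / ((k : ℝ) + 1)) * ‖Z‖ ^ 2 ≤
      (∑ i : Fin k, g (E i) (E i) Z Z).re :=
  stmt_12_general n k g hg hsym P hmin E Z hZ
end
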